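/- arXiv:math/0311256 — 4 statements merged into one kernel-verified Lean document; each statement's English description precedes it below -/
import Mathlib

section
/- Let r ∈ ℝ, α, β ∈ ℝ with β ≠ 0 and α/β ∉ ℤ, and a ∈ ℂ with |a| < 1. Define f : [r,∞) → ℂ by f(x) = exp(iαx)/(1 − a·exp(iβx)). Then there exists a sequence (f_n) of bounded C^∞ functions on [r,∞) with f_0 = f and f_{n+1}' = f_n for all n; explicitly one may take f_n(x) = Σ_{k=0}^∞ a^k exp(i(α+kβ)x)/(i(α+kβ))^n. -/
open Set Complex Filter

private lemma summable_poly_geom {q : ℝ} (hq0 : 0 ≤ q) (hq : q < 1) (j : ℕ) :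
    Summable fun k : ℕ => ((k : ℝ) + 1) ^ j * q ^ k := by
  have h : Summable fun k : ℕ => (k : ℝ) ^ j * q ^ k :=
    summable_pow_mul_geometric_of_norm_lt_one j
      (by rwa [Real.norm_eq_abs, _root_.abs_of_nonneg hq0])
  refine ((h.mul_left ((2 : ℝ) ^ j)).of_norm_bounded_eventually_nat ?_)
  filter_upwards [eventually_ge_atTop 1] with k hk
  have hk1 : (1 : ℝ) ≤ (k : ℝ) := by exact_mod_cast hk
  have h1 : ((k : ℝ) + 1) ^ j ≤ (2 * (k : ℝ)) ^ j := by
    apply pow_le_pow_left₀ (by positivity)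
    linarith
  have hqk : (0 : ℝ) ≤ q ^ k := pow_nonneg hq0 k
  calc ‖((k : ℝ) + 1) ^ j * q ^ k‖ = ((k : ℝ) + 1) ^ j * q ^ k := by
        rw [Real.norm_eq_abs, _root_.abs_of_nonneg (by positivity)]
    _ ≤ (2 * (k : ℝ)) ^ j * q ^ k := by gcongr
    _ = 2 ^ j * ((k : ℝ) ^ j * q ^ k) := by rw [mul_pow]; ring

theorem mem_B_of_geom (r α β : ℝ) (a : ℂ) (hβ : β ≠ 0) (hαβ : ∀ m : ℤ, α ≠ (m : ℝ) * β)
    (ha : ‖a‖ < 1) :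
    ∃ F : ℕ → ℝ → ℂ,
      (∀ x ∈ Ici r, F 0 x = Complex.exp (I * α * x) / (1 - a * Complex.exp (I * β * x))) ∧
      (∀ n, ContDiffOn ℝ (⊤ : ℕ∞) (F n) (Ici r)) ∧
      (∀ n, ∃ C : ℝ, ∀ x ∈ Ici r, ‖F n x‖ ≤ C) ∧
      (∀ n, ∀ x ∈ Ici r, HasDerivWithinAt (F (n + 1)) (F n x) (Ici r) x) ∧
      (∀ n, ∀ x : ℝ,
        F n x = ∑' k : ℕ, a ^ k * Complex.exp (I * (α + k * β) * x) / (I * (α + k * β)) ^ n) := by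
  have ha0 : (0 : ℝ) ≤ ‖a‖ := norm_nonneg a
  -- choose strip half-width ε
  obtain ⟨ε, hεS, hq⟩ : ∃ ε : ℝ, ε ∈ Ioi (0:ℝ) ∧ ‖a‖ * Real.exp (|β| * ε) < 1 := by
    have hcont : Tendsto (fun t : ℝ => ‖a‖ * Real.exp (|β| * t)) (nhdsWithin 0 (Ioi 0))
        (nhds (‖a‖ * Real.exp (|β| * 0))) := by
      apply Tendsto.mono_left _ nhdsWithin_le_nhds
      exact (Continuous.mul continuous_const
        ((Real.continuous_exp.comp (continuous_const.mul continuous_id)))).tendsto 0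
    have h0 : ‖a‖ * Real.exp (|β| * 0) < 1 := by simpa using ha
    have hev := hcont.eventually_lt_const h0
    exact (hev.and self_mem_nhdsWithin).exists.imp (fun ε h => ⟨h.2, h.1⟩)
  have hε : 0 < ε := hεS
  set q : ℝ := ‖a‖ * Real.exp (|β| * ε) with hq_def
  have hq0 : 0 ≤ q := by positivity
  -- strip
  set S : Set ℂ := Complex.im ⁻¹' Ioo (-ε) ε with hS_def
  have hSo : IsOpen S := isOpen_Ioo.preimage Complex.continuous_im
  have hSconv : Convex ℝ S := (convex_Ioo (-ε) ε).is_linear_preimage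
    ⟨fun x y => Complex.add_im x y, fun c x => by simp⟩
  have hSpre : IsPreconnected S := hSconv.isPreconnected
  have hmemS : ∀ x : ℝ, (x : ℂ) ∈ S := by
    intro x
    simp only [hS_def, mem_preimage, Complex.ofReal_im, mem_Ioo]
    constructor <;> linarith
  have h0S : (0 : ℂ) ∈ S := by simpa using hmemS 0
  -- coefficients
  set c : ℕ → ℂ := fun k => I * ((α : ℂ) + (k : ℕ) * (β : ℂ)) with hc_def
  have hceq : ∀ k : ℕ, c k = I * ((α + (k : ℝ) * β : ℝ) : ℂ) := by
    intro k; simp only [hc_def]; push_cast; ring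
  have ht0 : ∀ k : ℕ, (α + (k : ℝ) * β) ≠ 0 := by
    intro k h
    exact hαβ (-(k : ℤ)) (by push_cast; linarith)
  have hc0 : ∀ k, c k ≠ 0 := by
    intro k
    rw [hceq k]
    exact mul_ne_zero I_ne_zero (ofReal_ne_zero.2 (ht0 k))
  have hnormc : ∀ k, ‖c k‖ = |α + (k : ℝ) * β| := by
    intro k
    rw [hceq k, norm_mul, Complex.norm_I, one_mul, Complex.norm_real, Real.norm_eq_abs]
  -- uniform bound constant A
  obtain ⟨A, hA1, hAinv, hAub⟩ : ∃ A : ℝ, 1 ≤ A ∧ (∀ k : ℕ, ‖c k‖⁻¹ ≤ A) ∧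
      ∀ k : ℕ, ‖c k‖ ≤ A * ((k : ℝ) + 1) := by
    have h1 : Tendsto (fun k : ℕ => |α + (k : ℝ) * β|) atTop atTop := by
      apply tendsto_atTop_mono (f := fun k : ℕ => (k : ℝ) * |β| - |α|)
      · intro k
        have h := abs_add_le (α + (k : ℝ) * β) (-α)
        rw [show α + (k : ℝ) * β + -α = (k : ℝ) * β by ring, abs_neg, abs_mul,
          Nat.abs_cast] at h
        linarith
      · have := (tendsto_natCast_atTop_atTop (R := ℝ)).atTop_mul_const (abs_pos.2 hβ)
        exact tendsto_atTop_add_const_right _ (-|α|) this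
    have h2 : Tendsto (fun k : ℕ => ‖c k‖⁻¹) atTop (nhds 0) := by
      have := (tendsto_inv_atTop_zero.comp h1)
      apply this.congr
      intro k
      simp [hnormc k]
    obtain ⟨A0, hA0⟩ := h2.bddAbove_range
    refine ⟨max 1 (max A0 (|α| + |β|)), le_max_left _ _, ?_, ?_⟩
    · intro k
      exact ((hA0 (mem_range_self k)).trans ((le_max_left _ _).trans (le_max_right _ _)))
    · intro k
      have h3 : ‖c k‖ ≤ |α| + (k : ℝ) * |β| := by
        rw [hnormc k]
        calc |α + (k : ℝ) * β| ≤ |α| + |(k : ℝ) * β| := abs_add_le _ _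
          _ = |α| + (k : ℝ) * |β| := by rw [abs_mul, Nat.abs_cast]
      have h4 : |α| + (k : ℝ) * |β| ≤ (|α| + |β|) * ((k : ℝ) + 1) := by
        have hk : (0 : ℝ) ≤ (k : ℝ) := Nat.cast_nonneg k
        have ha' : (0:ℝ) ≤ |α| := abs_nonneg _
        have hb' : (0:ℝ) ≤ |β| := abs_nonneg _
        nlinarith
      have h5 : (|α| + |β|) ≤ max 1 (max A0 (|α| + |β|)) :=
        (le_max_right _ _).trans (le_max_right _ _)
      refine h3.trans (h4.trans ?_)
      have hk1 : (0:ℝ) ≤ (k : ℝ) + 1 := by positivity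
      exact mul_le_mul_of_nonneg_right h5 hk1
  have hA0 : 0 < A := lt_of_lt_of_le one_pos hA1
  -- terms
  set g : ℤ → ℕ → ℂ → ℂ := fun m k z => a ^ k * Complex.exp (c k * z) * c k ^ (-m) with hg_def
  set u : ℤ → ℕ → ℝ :=
    fun m k => Real.exp (|α| * ε) * q ^ k * (A * ((k : ℝ) + 1)) ^ m.natAbs with hu_def
  have hu : ∀ m : ℤ, Summable (u m) := by
    intro m
    have := ((summable_poly_geom hq0 hq m.natAbs).mul_left
      (Real.exp (|α| * ε) * A ^ m.natAbs))
    apply this.congr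
    intro k
    simp only [hu_def]
    rw [mul_pow A ((k : ℝ) + 1)]
    ring
  -- norm of terms on the strip
  have hbound : ∀ (m : ℤ) (k : ℕ), ∀ z ∈ S, ‖g m k z‖ ≤ u m k := by
    intro m k z hz
    have hz' : |z.im| ≤ ε := by
      rcases hz with hz
      simp only [hS_def, mem_preimage, mem_Ioo] at hz
      rw [abs_le]; constructor <;> linarith [hz.1, hz.2]
    have hre : (c k * z).re = -((α + (k : ℝ) * β) * z.im) := by
      rw [hceq k]
      simp [Complex.mul_re, Complex.mul_im]
      try ring
    have hexp : ‖Complex.exp (c k * z)‖ ≤ Real.exp (|α| * ε) * Real.exp (|β| * ε) ^ k := by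
      rw [Complex.norm_exp, hre]
      rw [← Real.exp_nat_mul, ← Real.exp_add]
      apply Real.exp_le_exp.2
      have h1 : -((α + (k : ℝ) * β) * z.im) ≤ |α + (k : ℝ) * β| * ε := by
        calc -((α + (k : ℝ) * β) * z.im) ≤ |(α + (k : ℝ) * β) * z.im| := neg_le_abs _
          _ = |α + (k : ℝ) * β| * |z.im| := abs_mul _ _
          _ ≤ |α + (k : ℝ) * β| * ε := by
              exact mul_le_mul_of_nonneg_left hz' (abs_nonneg _)
      have h2 : |α + (k : ℝ) * β| ≤ |α| + (k : ℝ) * |β| := by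
        calc |α + (k : ℝ) * β| ≤ |α| + |(k : ℝ) * β| := abs_add_le _ _
          _ = |α| + (k : ℝ) * |β| := by rw [abs_mul, Nat.abs_cast]
      calc -((α + (k : ℝ) * β) * z.im) ≤ |α + (k : ℝ) * β| * ε := h1
        _ ≤ (|α| + (k : ℝ) * |β|) * ε := by
            exact mul_le_mul_of_nonneg_right h2 hε.le
        _ = |α| * ε + (k : ℝ) * (|β| * ε) := by ring
    have hzpow : ‖c k ^ (-m)‖ ≤ (A * ((k : ℝ) + 1)) ^ m.natAbs := by
      rw [norm_zpow]
      have hk1 : (1 : ℝ) ≤ (k : ℝ) + 1 := by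
        have : (0:ℝ) ≤ (k : ℝ) := Nat.cast_nonneg k
        linarith
      have hAk : A ≤ A * ((k : ℝ) + 1) := le_mul_of_one_le_right hA0.le hk1
      rcases Int.eq_nat_or_neg m with ⟨n, rfl | rfl⟩
      · simp only [Int.natAbs_natCast]
        rw [zpow_neg, ← inv_zpow, zpow_natCast]
        exact pow_le_pow_left₀ (inv_nonneg.2 (norm_nonneg _)) ((hAinv k).trans hAk) n
      · simp only [neg_neg, Int.natAbs_neg, Int.natAbs_natCast]
        rw [zpow_natCast]
        exact pow_le_pow_left₀ (norm_nonneg _) (hAub k) n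
    have hnorm : ‖g m k z‖ = ‖a‖ ^ k * ‖Complex.exp (c k * z)‖ * ‖c k ^ (-m)‖ := by
      simp [hg_def, norm_mul, norm_pow]
    rw [hnorm]
    calc ‖a‖ ^ k * ‖Complex.exp (c k * z)‖ * ‖c k ^ (-m)‖
        ≤ ‖a‖ ^ k * (Real.exp (|α| * ε) * Real.exp (|β| * ε) ^ k) *
          ((A * ((k : ℝ) + 1)) ^ m.natAbs) := by
          apply mul_le_mul ?_ hzpow (norm_nonneg _) (by positivity)
          exact mul_le_mul_of_nonneg_left hexp (by positivity)
      _ = u m k := by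
          simp only [hu_def, hq_def]
          rw [mul_pow]
          ring
  have hsummg : ∀ (m : ℤ), ∀ z ∈ S, Summable fun k => g m k z := by
    intro m z hz
    exact Summable.of_norm_bounded (hu m) (fun k => hbound m k z hz)
  set G : ℤ → ℂ → ℂ := fun m z => ∑' k, g m k z with hG_def
  -- termwise derivative
  have hterm : ∀ (m : ℤ) (k : ℕ) (z : ℂ), HasDerivAt (fun w => g m k w) (g (m - 1) k z) z := by
    intro m k z
    have h1 : HasDerivAt (fun w : ℂ => Complex.exp (c k * w))
        (Complex.exp (c k * z) * c k) z := by
      have := (Complex.hasDerivAt_exp (c k * z)).comp z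
        ((hasDerivAt_id z).const_mul (c k))
      simpa [Function.comp_def] using this
    have h2 := (h1.const_mul (a ^ k)).mul_const (c k ^ (-m))
    refine HasDerivAt.congr_deriv h2 ?_
    have hzp : c k ^ (-(m - 1)) = c k ^ (-m) * c k := by
      rw [show -(m - 1) = -m + 1 by ring, zpow_add_one₀ (hc0 k)]
    simp only [hg_def, hzp]
    ring
  -- derivative of the sum on the strip
  have hG : ∀ (m : ℤ), ∀ z ∈ S, HasDerivAt (G m) (G (m - 1) z) z := by
    intro m z hz
    exact hasDerivAt_tsum_of_isPreconnected (hu (m - 1)) hSo hSpre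
      (fun k w _ => hterm m k w) (fun k w hw => hbound (m - 1) k w hw)
      h0S (hsummg m 0 h0S) hz
  -- analyticity
  have hGanal : ∀ m : ℤ, AnalyticOnNhd ℂ (G m) S := by
    intro m
    exact DifferentiableOn.analyticOnNhd
      (fun z hz => (hG m z hz).differentiableAt.differentiableWithinAt) hSo
  refine ⟨fun n x => G (n : ℤ) (x : ℂ), ?_, ?_, ?_, ?_, ?_⟩
  · -- closed form for F 0
    intro x _
    have hw : ‖a * Complex.exp (I * (β : ℂ) * (x : ℝ))‖ < 1 := by
      rw [norm_mul]
      have : ‖Complex.exp (I * (β : ℂ) * (x : ℝ))‖ = 1 := by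
        rw [Complex.norm_exp]
        have : (I * (β : ℂ) * (x : ℝ)).re = 0 := by
          simp [Complex.mul_re, Complex.mul_im]
        rw [this, Real.exp_zero]
      rw [this, mul_one]; exact ha
    have hterm0 : ∀ k : ℕ, g 0 k (x : ℂ) =
        Complex.exp (I * (α : ℂ) * (x : ℝ)) * (a * Complex.exp (I * (β : ℂ) * (x : ℝ))) ^ k := by
      intro k
      simp only [hg_def, neg_zero, zpow_zero, mul_one]
      have harg : c k * (x : ℂ) = I * (α : ℂ) * (x : ℝ) + (k : ℕ) * (I * (β : ℂ) * (x : ℝ)) := by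
        simp only [hc_def]; push_cast; ring
      rw [harg, Complex.exp_add, Complex.exp_nat_mul, mul_pow]
      ring
    simp only [hG_def, Nat.cast_zero]
    rw [tsum_congr hterm0, tsum_mul_left, tsum_geometric_of_norm_lt_one hw, div_eq_mul_inv]
  · -- smoothness
    intro n
    have h1 : AnalyticOnNhd ℝ (G (n : ℤ)) S := (hGanal n).restrictScalars
    have h2 : AnalyticOnNhd ℝ (fun x : ℝ => (x : ℂ)) univ := by
      intro x _
      exact Complex.ofRealCLM.analyticAt x
    have h3 : AnalyticOnNhd ℝ (fun x : ℝ => G (n : ℤ) (x : ℂ)) univ :=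
      h1.comp h2 (fun x _ => hmemS x)
    exact (h3.contDiffOn_of_completeSpace (n := (⊤ : ℕ∞))).mono (subset_univ _)
  · -- boundedness
    intro n
    refine ⟨∑' k, u (n : ℤ) k, fun x _ => ?_⟩
    have hs : Summable fun k => ‖g (n : ℤ) k (x : ℂ)‖ :=
      (hu (n:ℤ)).of_nonneg_of_le (fun k => norm_nonneg _)
        (fun k => hbound (n : ℤ) k (x : ℂ) (hmemS x))
    calc ‖G (n : ℤ) (x : ℂ)‖ ≤ ∑' k, ‖g (n : ℤ) k (x : ℂ)‖ := norm_tsum_le_tsum_norm hs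
      _ ≤ ∑' k, u (n : ℤ) k :=
        Summable.tsum_le_tsum (fun k => hbound (n : ℤ) k (x : ℂ) (hmemS x)) hs (hu (n : ℤ))
  · -- derivative chain
    intro n x _
    have h := (hG ((n : ℤ) + 1) (x : ℂ) (hmemS x))
    have heq : ((n : ℤ) + 1) - 1 = (n : ℤ) := by ring
    rw [heq] at h
    have h2 : HasDerivAt (fun y : ℝ => G ((n : ℤ) + 1) (y : ℂ)) (G (n : ℤ) (x : ℂ)) x :=
      h.comp_ofReal
    show HasDerivWithinAt (fun y : ℝ => G ((n + 1 : ℕ) : ℤ) (y : ℂ)) (G (n : ℤ) (x : ℂ)) (Ici r) x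
    rw [show ((n + 1 : ℕ) : ℤ) = (n : ℤ) + 1 by push_cast; ring]
    exact h2.hasDerivWithinAt
  · -- tsum formula
    intro n x
    apply tsum_congr
    intro k
    simp only [hG_def, hg_def]
    rw [zpow_neg, zpow_natCast, div_eq_mul_inv]
end

section
/- Let Q, P_1,...,P_T ∈ ℝ[X_1,...,X_N] be such that P_t(x) > 0 for every x ∈ [1,∞)^N and every t. Then the set C = { σ ∈ ℝ^T : the family ( |Q(m)| · Π_{t=1}^T P_t(m)^{−σ_t} )_{m ∈ (ℕ_{≥1})^N} is summable } is a convex subset of ℝ^T. -/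
open MvPolynomial

theorem convergence_domain_convex {N T : ℕ}
    (Q : MvPolynomial (Fin N) ℝ) (P : Fin T → MvPolynomial (Fin N) ℝ)
    (hP : ∀ t, ∀ x : Fin N → ℝ, (∀ n, 1 ≤ x n) → 0 < eval x (P t)) :
    Convex ℝ {σ : Fin T → ℝ |
      Summable (fun m : Fin N → ℕ+ =>
        |eval (fun n => ((m n : ℕ) : ℝ)) Q| *
          ∏ t, eval (fun n => ((m n : ℕ) : ℝ)) (P t) ^ (-(σ t)))} := by
  intro σ hσ τ hτ a b ha hb hab
  simp only [Set.mem_setOf_eq] at hσ hτ ⊢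
  have hpos : ∀ (m : Fin N → ℕ+) (t : Fin T),
      0 < eval (fun n => ((m n : ℕ) : ℝ)) (P t) := by
    intro m t
    exact hP t _ (fun n => by exact_mod_cast (m n).one_le)
  have key : ∀ m : Fin N → ℕ+,
      |eval (fun n => ((m n : ℕ) : ℝ)) Q| *
          ∏ t, eval (fun n => ((m n : ℕ) : ℝ)) (P t) ^ (-((a • σ + b • τ) t))
      ≤ a * (|eval (fun n => ((m n : ℕ) : ℝ)) Q| *
          ∏ t, eval (fun n => ((m n : ℕ) : ℝ)) (P t) ^ (-(σ t)))
        + b * (|eval (fun n => ((m n : ℕ) : ℝ)) Q| *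
          ∏ t, eval (fun n => ((m n : ℕ) : ℝ)) (P t) ^ (-(τ t))) := by
    intro m
    set q := |eval (fun n => ((m n : ℕ) : ℝ)) Q| with hq
    set A := ∏ t, eval (fun n => ((m n : ℕ) : ℝ)) (P t) ^ (-(σ t)) with hA
    set B := ∏ t, eval (fun n => ((m n : ℕ) : ℝ)) (P t) ^ (-(τ t)) with hB
    have hApos : 0 < A := Finset.prod_pos fun t _ => Real.rpow_pos_of_pos (hpos m t) _
    have hBpos : 0 < B := Finset.prod_pos fun t _ => Real.rpow_pos_of_pos (hpos m t) _
    have hprod : (∏ t, eval (fun n => ((m n : ℕ) : ℝ)) (P t) ^ (-((a • σ + b • τ) t)))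
        = A ^ a * B ^ b := by
      rw [hA, hB, ← Real.finset_prod_rpow _ _
        (fun t _ => (Real.rpow_pos_of_pos (hpos m t) _).le) a,
        ← Real.finset_prod_rpow _ _
        (fun t _ => (Real.rpow_pos_of_pos (hpos m t) _).le) b,
        ← Finset.prod_mul_distrib]
      refine Finset.prod_congr rfl fun t _ => ?_
      rw [← Real.rpow_mul (hpos m t).le, ← Real.rpow_mul (hpos m t).le,
        ← Real.rpow_add (hpos m t)]
      congr 1
      simp [mul_comm]
      ring
    rw [hprod]
    have hgm : A ^ a * B ^ b ≤ a * A + b * B :=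
      Real.geom_mean_le_arith_mean2_weighted ha hb hApos.le hBpos.le hab
    calc q * (A ^ a * B ^ b) ≤ q * (a * A + b * B) :=
          mul_le_mul_of_nonneg_left hgm (abs_nonneg _)
      _ = a * (q * A) + b * (q * B) := by ring
  refine Summable.of_nonneg_of_le (fun m => ?_) key
    ((hσ.mul_left a).add (hτ.mul_left b))
  exact mul_nonneg (abs_nonneg _)
    (Finset.prod_nonneg fun t _ => (Real.rpow_pos_of_pos (hpos m t) _).le)
end

section
/- Let P ∈ ℝ[X_1,...,X_N] of total degree p, and suppose there is a constant c > 0 with |∂^α P(x)| ≤ c·P(x) for all nonzero multi-indices α and all x ∈ [1,∞)^N (in particular P > 0 on [1,∞)^N). Set A = c·Σ_{0 < |α| ≤ p} 1/α! and ε = 1/(4A+2). Then for all x ∈ [1,∞)^N and all y ∈ [−2ε, 2ε]^N: |P(x + iy) − P(x)| ≤ (1/2)·P(x), and consequently Re(P(x + iy)) ≥ (1/2)·P(x). -/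
/-!
For a polynomial, Taylor's formula `P(x + z) = ∑_α z^α / α! · ∂^α P(x)` is an exact finite
identity: on a monomial it is the binomial theorem in each variable, because
`∂^α X^d = d! / (d - α)! · X^(d - α)`. Taking `z = i y` with `|y_n| ≤ 2ε ≤ 1`, every nonzero
multi-index has `|z^α| ≤ 2ε`, so the hypothesis `|∂^α P(x)| ≤ c P(x)` bounds the remainder by
`2ε · A · P(x) ≤ P(x) / 2`; the bound on the real part follows from `|Re w| ≤ ‖w‖`.
-/

open MvPolynomial

/-- Iterated partial derivative `∂^α` of a multivariate polynomial. -/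
noncomputable def pderivIter {N : ℕ} (α : Fin N → ℕ) :
    Module.End ℝ (MvPolynomial (Fin N) ℝ) :=
  (List.ofFn fun n : Fin N => ((MvPolynomial.pderiv n).toLinearMap ^ α n)).prod

open Finset

section PderivIter

variable {N : ℕ}

theorem pow_pderiv_monomial (n : Fin N) (k : ℕ) (e : Fin N →₀ ℕ) (s : ℝ) :
    ((pderiv n).toLinearMap ^ k : Module.End ℝ (MvPolynomial (Fin N) ℝ)) (monomial e s) =
      monomial (e - Finsupp.single n k) (s * (e n).descFactorial k) := by
  induction k with
  | zero => simp
  | succ k ih =>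
    have hexp : e - Finsupp.single n k - Finsupp.single n 1 = e - Finsupp.single n (k + 1) := by
      ext m
      by_cases h : m = n <;> simp [h, Nat.sub_sub]
    rw [pow_succ', Module.End.mul_apply, ih, Derivation.coeFn_coe, pderiv_monomial, hexp,
      Finsupp.tsub_apply, Finsupp.single_eq_same, Nat.descFactorial_succ, Nat.cast_mul, mul_assoc,
      mul_comm ((e n).descFactorial k : ℝ)]

theorem list_prod_pow_pderiv_monomial (α : Fin N → ℕ) (e : Fin N →₀ ℕ) (s : ℝ)
    {L : List (Fin N)} (hL : L.Nodup) :
    (L.map fun n => ((pderiv n).toLinearMap ^ α n : Module.End ℝ (MvPolynomial (Fin N) ℝ))).prod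
        (monomial e s) =
      monomial (e - ∑ n ∈ L.toFinset, Finsupp.single n (α n))
        (s * ∏ n ∈ L.toFinset, ((e n).descFactorial (α n) : ℝ)) := by
  induction L with
  | nil => simp
  | cons n L ih =>
    obtain ⟨hn, hL⟩ := List.nodup_cons.1 hL
    have hn' : n ∉ L.toFinset := by simpa using hn
    have hen : (e - ∑ m ∈ L.toFinset, Finsupp.single m (α m)) n = e n := by
      simp [Finsupp.single_apply, hn']
    rw [List.map_cons, List.prod_cons, Module.End.mul_apply, ih hL, pow_pderiv_monomial, hen,
      List.toFinset_cons, sum_insert hn', prod_insert hn', add_comm, ← tsub_tsub, mul_assoc,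
      mul_comm (∏ _ ∈ _, _)]

-- Where `e n < α n` the coefficient vanishes, so the truncated subtraction `e - α` is harmless.
theorem pderivIter_monomial (α : Fin N → ℕ) (e : Fin N →₀ ℕ) (s : ℝ) :
    pderivIter α (monomial e s) =
      monomial (e - ∑ n, Finsupp.single n (α n)) (s * ∏ n, ((e n).descFactorial (α n) : ℝ)) := by
  rw [pderivIter, List.ofFn_eq_map]
  simpa [List.toFinset_finRange] using
    list_prod_pow_pderiv_monomial α e s (List.nodup_finRange N)

theorem pderivIter_monomial_eq_zero {α : Fin N → ℕ} {e : Fin N →₀ ℕ} {n : Fin N}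
    (h : e n < α n) (s : ℝ) : pderivIter α (monomial e s) = 0 := by
  rw [pderivIter_monomial,
    prod_eq_zero (mem_univ n) (by simp [Nat.descFactorial_eq_zero_iff_lt.2 h]), mul_zero,
    monomial_zero]

theorem pderivIter_zero (P : MvPolynomial (Fin N) ℝ) : pderivIter (0 : Fin N → ℕ) P = P := by
  simp [pderivIter]

theorem pderivIter_eq_zero_of_totalDegree_lt {α : Fin N → ℕ} {P : MvPolynomial (Fin N) ℝ}
    (h : P.totalDegree < ∑ n, α n) : pderivIter α P = 0 := by
  rw [P.as_sum, map_sum]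
  refine sum_eq_zero fun e he => ?_
  obtain ⟨n, hn⟩ : ∃ n, e n < α n := by
    by_contra! hle
    have : ∑ n, α n ≤ e.sum fun _ k => k := by
      rw [Finsupp.sum_fintype _ _ fun _ => rfl]
      exact sum_le_sum fun n _ => hle n
    exact (this.trans (le_totalDegree he)).not_gt h
  exact pderivIter_monomial_eq_zero hn _

end PderivIter

def nonzeroMultiIndices (N p : ℕ) : Finset (Fin N → ℕ) :=
  (Iic fun _ => p).filter fun α => 0 < ∑ n, α n ∧ ∑ n, α n ≤ p

section Taylor

variable {N : ℕ} {S : Type*} [CommRing S] [Algebra ℝ S]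

theorem smul_aeval_pderivIter_monomial (d : Fin N →₀ ℕ) (r : ℝ) (x z : Fin N → S)
    (α : Fin N → ℕ) :
    (∏ n, ((α n).factorial : ℝ))⁻¹ • ((∏ n, z n ^ α n) * aeval x (pderivIter α (monomial d r))) =
      algebraMap ℝ S r * ∏ n, z n ^ α n * x n ^ (d n - α n) * ((d n).choose (α n) : S) := by
  have hcoef : (∏ n, ((α n).factorial : ℝ))⁻¹ * (r * ∏ n, ((d n).descFactorial (α n) : ℝ)) =
      r * ∏ n, ((d n).choose (α n) : ℝ) := by
    simp only [Nat.descFactorial_eq_factorial_mul_choose, Nat.cast_mul, prod_mul_distrib]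
    field_simp
  have hexp : ∀ n, (d - ∑ m, Finsupp.single m (α m)) n = d n - α n := by
    simp [Finsupp.single_apply]
  rw [pderivIter_monomial, aeval_monomial, Finsupp.prod_fintype _ _ fun _ => pow_zero _,
    Algebra.smul_def]
  simp only [hexp]
  calc _ = algebraMap ℝ S ((∏ n, ((α n).factorial : ℝ))⁻¹ *
        (r * ∏ n, ((d n).descFactorial (α n) : ℝ))) *
          ((∏ n, z n ^ α n) * ∏ n, x n ^ (d n - α n)) := by simp only [map_mul]; ring
    _ = _ := by
      rw [hcoef, map_mul, map_prod, prod_mul_distrib, prod_mul_distrib]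
      simp only [map_natCast]
      ring

theorem aeval_add_monomial_eq_sum (d : Fin N →₀ ℕ) (r : ℝ) (x z : Fin N → S) {D : ℕ}
    (hd : ∀ n, d n ≤ D) :
    aeval (fun n => x n + z n) (monomial d r) =
      ∑ α ∈ Iic fun _ => D, (∏ n, ((α n).factorial : ℝ))⁻¹ •
        ((∏ n, z n ^ α n) * aeval x (pderivIter α (monomial d r))) := by
  rw [← sum_subset (Iic_subset_Iic.2 hd) fun α _ hα => ?vanish]
  case vanish =>
    obtain ⟨n, hn⟩ : ∃ n, d n < α n := by simpa [Pi.le_def] using hα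
    rw [pderivIter_monomial_eq_zero hn, map_zero, mul_zero, smul_zero]
  have hbox : Fintype.piFinset (fun n => range (d n + 1)) = Iic ⇑d := by
    ext α
    simp [Pi.le_def]
  rw [aeval_monomial, Finsupp.prod_fintype _ _ fun _ => pow_zero _]
  simp only [add_comm (x _), add_pow]
  rw [prod_univ_sum, hbox, mul_sum]
  exact sum_congr rfl fun α _ => (smul_aeval_pderivIter_monomial d r x z α).symm

theorem aeval_add_eq_sum_pderivIter (P : MvPolynomial (Fin N) ℝ) (x z : Fin N → S) :
    aeval (fun n => x n + z n) P =
      ∑ α ∈ Iic fun _ => P.totalDegree, (∏ n, ((α n).factorial : ℝ))⁻¹ •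
        ((∏ n, z n ^ α n) * aeval x (pderivIter α P)) := by
  have hdeg : ∀ d ∈ P.support, ∀ n, d n ≤ P.totalDegree := fun d hd n =>
    (monomial_le_degreeOf n hd).trans (degreeOf_le_totalDegree P n)
  conv_lhs => rw [P.as_sum]
  rw [map_sum, sum_congr rfl fun d hd => aeval_add_monomial_eq_sum d _ x z (hdeg d hd), sum_comm]
  refine sum_congr rfl fun α _ => ?_
  rw [← smul_sum, ← mul_sum, ← map_sum, ← map_sum, ← P.as_sum]

theorem aeval_add_sub_aeval_eq_sum (P : MvPolynomial (Fin N) ℝ) (x z : Fin N → S) :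
    aeval (fun n => x n + z n) P - aeval x P =
      ∑ α ∈ nonzeroMultiIndices N P.totalDegree, (∏ n, ((α n).factorial : ℝ))⁻¹ •
        ((∏ n, z n ^ α n) * aeval x (pderivIter α P)) := by
  have hzero : 0 ∈ (Iic fun _ => P.totalDegree).filter
      fun α : Fin N → ℕ => ∑ n, α n ≤ P.totalDegree := by simp
  have herase : ((Iic fun _ => P.totalDegree).filter
      fun α : Fin N → ℕ => ∑ n, α n ≤ P.totalDegree).erase 0 =
        nonzeroMultiIndices N P.totalDegree := by
    ext α
    simp [nonzeroMultiIndices, pos_iff_ne_zero, funext_iff]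
    tauto
  rw [aeval_add_eq_sum_pderivIter,
    ← sum_filter_of_ne (p := fun α => ∑ n, α n ≤ P.totalDegree) fun α _ h => ?vanish,
    ← add_sum_erase _ _ hzero, herase]
  · simp [pderivIter_zero]
  case vanish =>
    by_contra hlt
    rw [pderivIter_eq_zero_of_totalDegree_lt (not_le.1 hlt), map_zero, mul_zero, smul_zero] at h
    exact h rfl

end Taylor

theorem prod_pow_le_of_le_one {ι : Type*} [Fintype ι] {a : ι → ℝ} {δ : ℝ} {α : ι → ℕ}
    (ha₀ : ∀ i, 0 ≤ a i) (ha : ∀ i, a i ≤ δ) (hδ : δ ≤ 1) (hα : α ≠ 0) :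
    ∏ i, a i ^ α i ≤ δ := by
  classical
  obtain ⟨i, hi⟩ := Function.ne_iff.1 hα
  have hrest : ∏ j ∈ univ.erase i, a j ^ α j ≤ 1 :=
    prod_le_one (fun j _ => pow_nonneg (ha₀ j) _)
      fun j _ => pow_le_one₀ (ha₀ j) ((ha j).trans hδ)
  rw [← mul_prod_erase univ _ (mem_univ i)]
  calc a i ^ α i * ∏ j ∈ univ.erase i, a j ^ α j ≤ a i ^ α i :=
        mul_le_of_le_one_right (pow_nonneg (ha₀ i) _) hrest
    _ ≤ a i := pow_le_of_le_one (ha₀ i) ((ha i).trans hδ) hi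
    _ ≤ δ := ha i

theorem norm_aeval_add_sub_le {N : ℕ} {K : Type*} [NormedField K] [NormedAlgebra ℝ K]
    (P : MvPolynomial (Fin N) ℝ) (x : Fin N → ℝ) {z : Fin N → K} {δ M : ℝ}
    (hz : ∀ n, ‖z n‖ ≤ δ) (hδ : δ ≤ 1)
    (hM : ∀ α : Fin N → ℕ, α ≠ 0 → |eval x (pderivIter α P)| ≤ M) :
    ‖aeval (fun n => algebraMap ℝ K (x n) + z n) P - algebraMap ℝ K (eval x P)‖ ≤
      δ * M * ∑ α ∈ nonzeroMultiIndices N P.totalDegree, (∏ n, ((α n).factorial : ℝ))⁻¹ := by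
  have hreal : ∀ Q : MvPolynomial (Fin N) ℝ,
      aeval (fun n => algebraMap ℝ K (x n)) Q = algebraMap ℝ K (eval x Q) :=
    fun Q => aeval_algebraMap_apply K x Q
  rw [← hreal, aeval_add_sub_aeval_eq_sum, mul_sum]
  refine (norm_sum_le _ _).trans (sum_le_sum fun α hα => ?_)
  have hα₀ : α ≠ 0 := by
    rintro rfl
    simp [nonzeroMultiIndices] at hα
  have hzα : ‖∏ n, z n ^ α n‖ ≤ δ := by
    simpa only [norm_prod, norm_pow] using
      prod_pow_le_of_le_one (fun n => norm_nonneg (z n)) hz hδ hα₀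
  rw [norm_smul, hreal, norm_mul, norm_algebraMap', Real.norm_eq_abs, Real.norm_eq_abs,
    abs_of_nonneg (by positivity), mul_comm]
  gcongr
  · exact (norm_nonneg _).trans hzα
  · exact hM α hα₀

theorem control_near_axis {N : ℕ} (P : MvPolynomial (Fin N) ℝ) (c : ℝ) (hc : 0 < c)
    (hpos : ∀ x : Fin N → ℝ, (∀ n, 1 ≤ x n) → 0 < eval x P)
    (hder : ∀ α : Fin N → ℕ, α ≠ 0 → ∀ x : Fin N → ℝ, (∀ n, 1 ≤ x n) →
      |eval x (pderivIter α P)| ≤ c * eval x P)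
    (A ε : ℝ)
    (hA : A = c * ∑ α ∈ (Finset.Iic (fun _ : Fin N => P.totalDegree)).filter
        (fun α : Fin N → ℕ => 0 < ∑ n, α n ∧ ∑ n, α n ≤ P.totalDegree),
        (∏ n, (Nat.factorial (α n) : ℝ))⁻¹)
    (hε : ε = 1 / (4 * A + 2)) :
    ∀ x : Fin N → ℝ, (∀ n, 1 ≤ x n) → ∀ y : Fin N → ℝ, (∀ n, |y n| ≤ 2 * ε) →
      ‖(aeval (fun n => (x n : ℂ) + (y n : ℂ) * Complex.I) P) - ((eval x P : ℝ) : ℂ)‖ ≤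
          (1 / 2) * eval x P ∧
      (1 / 2) * eval x P ≤ (aeval (fun n => (x n : ℂ) + (y n : ℂ) * Complex.I) P).re := by
  intro x hx y hy
  have hPx := hpos x hx
  have hA₀ : 0 ≤ A := hA ▸ mul_nonneg hc.le (sum_nonneg fun α _ => by positivity)
  have hε₁ : 2 * ε ≤ 1 := by
    rw [hε, ← mul_div_assoc, div_le_one (by linarith)]
    linarith
  have hεA : 2 * ε * A ≤ 1 / 2 := by
    rw [hε, mul_one_div, div_mul_eq_mul_div, div_le_iff₀ (by linarith)]
    linarith
  have hdist : ‖aeval (fun n => (x n : ℂ) + (y n : ℂ) * Complex.I) P - ((eval x P : ℝ) : ℂ)‖ ≤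
      1 / 2 * eval x P := by
    have := norm_aeval_add_sub_le (K := ℂ) P x (z := fun n => (y n : ℂ) * Complex.I)
      (fun n => by simpa using hy n) hε₁ fun α hα => hder α hα x hx
    rw [Complex.coe_algebraMap] at this
    calc _ ≤ 2 * ε * (c * eval x P) * _ := this
      _ = 2 * ε * A * eval x P := by rw [hA, nonzeroMultiIndices]; ring
      _ ≤ 1 / 2 * eval x P := by gcongr
  refine ⟨hdist, ?_⟩
  have hre := (Complex.abs_re_le_norm _).trans hdist
  rw [Complex.sub_re, Complex.ofReal_re] at hre
  linarith [(abs_le.1 hre).1]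
end

section
/- Let μ ∈ ℂ with |μ| = 1, μ ≠ 1, and let k ∈ ℕ. Define f : ℝ → ℂ by f(x) = μ/(e^x − μ) = Σ_{m≥1} μ^m e^{−mx} (x > 0), and suppose the Dirichlet series ζ_μ(s) = Σ_{m≥1} μ^m m^{−s} admits a holomorphic continuation Z to ℂ satisfying Z(−k) = (−1)^k k! c_k whenever f(x) = Σ_{j<K} c_j x^j + O(x^K) near 0 for all K. Then ζ_μ(−k) = ((−1)^k μ/(1−μ)) · Σ_{ℓ=0}^{k} ℓ! · S(k,ℓ) / (μ−1)^ℓ, where S(k,ℓ) are Stirling numbers of the second kind. -/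
open Complex Asymptotics Filter

/-- The Stirling number of the second kind: the number of partitions of a
`k`-element set into `ℓ` (nonempty) blocks. -/
noncomputable def stirling2 (k ℓ : ℕ) : ℕ :=
  Nat.card {P : Finpartition (Finset.univ : Finset (Fin k)) // P.parts.card = ℓ}

/-!
By hypothesis `Z (-k) = (-1)^k k! c_k`, where `c_k = g⁽ᵏ⁾(0) / k!` is the Taylor coefficient at `0`
of the function `g w = μ / (exp w - μ)`, analytic near `0` because `μ ≠ 1`. Writing
`T_ℓ w = exp w ^ ℓ / (exp w - μ)^(ℓ+1)`, one has `T_ℓ' = ℓ T_ℓ - (ℓ+1) T_(ℓ+1)`, so by induction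
`g⁽ᵏ⁾ = μ ∑ ℓ, (-1)^ℓ ℓ! S(k,ℓ) T_ℓ`: the coefficients obey exactly the recurrence
`S(k+1,ℓ+1) = (ℓ+1) S(k,ℓ+1) + S(k,ℓ)`. Evaluating at `0`, where `T_ℓ 0 = (1 - μ)^-(ℓ+1)`,
gives the formula. The partition counts `stirling2` obey that recurrence because a partition of
`insert a s` is the same as a partition `Q` of `s` together with the part of `Q` that receives `a`,
or `∅` when `{a}` is a part of its own.
-/

open Finset Topology

namespace Finpartition

variable {α : Type*} [DecidableEq α] {s t : Finset α} {a : α}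

theorem ext_part {P Q : Finpartition s} (h : ∀ x ∈ s, P.part x = Q.part x) : P = Q := by
  suffices key : ∀ {P Q : Finpartition s}, (∀ x ∈ s, P.part x = Q.part x) → P.parts ⊆ Q.parts from
    Finpartition.ext (Subset.antisymm (key h) (key fun x hx => (h x hx).symm))
  intro P Q h u hu
  obtain ⟨x, hx⟩ := P.nonempty_of_mem_parts hu
  rw [← P.part_eq_of_mem hu hx, h x (P.le hu hx)]
  exact Q.part_mem.2 (P.le hu hx)

theorem part_restrict (P : Finpartition s) (hts : t ⊆ s) {x : α} (hx : x ∈ t) :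
    (P.restrict hts).part x = P.part x ∩ t := by
  refine part_eq_of_mem _ ?_ (mem_inter.2 ⟨P.mem_part (hts hx), hx⟩)
  exact mem_erase.2 ⟨ne_empty_of_mem (mem_inter.2 ⟨P.mem_part (hts hx), hx⟩),
    mem_image_of_mem _ (P.part_mem.2 (hts hx))⟩

theorem part_avoid (P : Finpartition s) {x : α} (hx : x ∈ s \ t) :
    (P.avoid t).part x = P.part x \ t := by
  obtain ⟨hxs, hxt⟩ := mem_sdiff.1 hx
  refine part_eq_of_mem _ ((P.mem_avoid).2 ⟨_, P.part_mem.2 hxs, ?_, rfl⟩)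
    (mem_sdiff.2 ⟨P.mem_part hxs, hxt⟩)
  exact fun h => hxt (h (P.mem_part hxs))

theorem part_extend_of_mem_left {b c : Finset α} (P : Finpartition s) (hb : b ≠ ⊥)
    (hsb : Disjoint s b) (hc : s ⊔ b = c) {x : α} (hx : x ∈ s) :
    (P.extend hb hsb hc).part x = P.part x :=
  part_eq_of_mem _ (mem_insert_of_mem (P.part_mem.2 hx)) (P.mem_part hx)

theorem part_extend_of_mem_right {b c : Finset α} (P : Finpartition s) (hb : b ≠ ⊥)
    (hsb : Disjoint s b) (hc : s ⊔ b = c) {x : α} (hx : x ∈ b) :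
    (P.extend hb hsb hc).part x = b :=
  part_eq_of_mem _ (mem_insert_self _ _) hx

theorem disjoint_of_ne_of_mem_insert_empty (P : Finpartition s) {u : Finset α} (hu : u ∈ P.parts)
    (ht : t ∈ insert ∅ P.parts) (hut : u ≠ t) : Disjoint u t := by
  rcases mem_insert.1 ht with rfl | ht
  · exact disjoint_empty_right u
  · exact P.disjoint hu ht hut

theorem avoid_parts_of_mem_insert_empty (P : Finpartition s) (ht : t ∈ insert ∅ P.parts) :
    (P.avoid t).parts = P.parts.erase t := by
  ext u
  rw [mem_avoid, mem_erase]
  constructor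
  · rintro ⟨v, hv, hvt, rfl⟩
    have hvt' : v ≠ t := fun h => hvt h.le
    rw [sdiff_eq_self_of_disjoint (P.disjoint_of_ne_of_mem_insert_empty hv ht hvt')]
    exact ⟨hvt', hv⟩
  · rintro ⟨hut, hu⟩
    have hdisj := P.disjoint_of_ne_of_mem_insert_empty hu ht hut
    refine ⟨u, hu, fun h => P.ne_bot hu ?_, sdiff_eq_self_of_disjoint hdisj⟩
    exact hdisj.eq_bot_of_le h

theorem subset_of_mem_insert_empty (P : Finpartition s) (ht : t ∈ insert ∅ P.parts) : t ⊆ s := by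
  rcases mem_insert.1 ht with rfl | ht
  · exact empty_subset s
  · exact P.le ht

/-- The finpartition of `insert a s` obtained from `P` by adding `a` to the part `t`;
for `t = ∅` this makes `{a}` a new part. -/
def insertInto (P : Finpartition s) (ha : a ∉ s) (hts : t ⊆ s) : Finpartition (insert a s) :=
  (P.avoid t).extend (b := insert a t) (insert_ne_empty a t)
    (disjoint_insert_right.2 ⟨fun h => ha (mem_sdiff.1 h).1, sdiff_disjoint⟩)
    (by rw [sup_eq_union, union_insert, sdiff_union_of_subset hts])

section insertInto

variable (P : Finpartition s) (ha : a ∉ s) (hts : t ⊆ s)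

theorem part_insertInto_of_mem {x : α} (hx : x ∈ insert a t) :
    (P.insertInto ha hts).part x = insert a t :=
  part_extend_of_mem_right _ _ _ _ hx

theorem part_insertInto_of_notMem (ht : t ∈ insert ∅ P.parts) {x : α} (hx : x ∈ s)
    (hxt : x ∉ t) : (P.insertInto ha hts).part x = P.part x := by
  rw [insertInto, part_extend_of_mem_left _ _ _ _ (mem_sdiff.2 ⟨hx, hxt⟩),
    part_avoid _ (mem_sdiff.2 ⟨hx, hxt⟩)]
  refine sdiff_eq_self_of_disjoint (P.disjoint_of_ne_of_mem_insert_empty (P.part_mem.2 hx) ht ?_)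
  rintro rfl
  exact hxt (P.mem_part hx)

theorem card_parts_insertInto (ht : t ∈ insert ∅ P.parts) :
    #(P.insertInto ha hts).parts = #P.parts + if t = ∅ then 1 else 0 := by
  rw [insertInto, card_extend, avoid_parts_of_mem_insert_empty _ ht]
  split_ifs with h
  · rw [h, erase_eq_of_notMem P.empty_notMem_parts]
  · rw [card_erase_add_one ((mem_insert.1 ht).resolve_left h), add_zero]

end insertInto

theorem part_inter_mem_insert_empty_restrict (P : Finpartition s) (hts : t ⊆ s) {x : α}
    (hx : x ∈ s) : P.part x ∩ t ∈ insert ∅ (P.restrict hts).parts := by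
  by_cases h : P.part x ∩ t = ∅
  · exact h ▸ mem_insert_self _ _
  · exact mem_insert_of_mem (mem_erase.2 ⟨h, mem_image_of_mem _ (P.part_mem.2 hx)⟩)

theorem insertInto_restrict (P : Finpartition (insert a s)) (ha : a ∉ s) :
    (P.restrict (subset_insert a s)).insertInto ha (inter_subset_right (s₁ := P.part a)) = P := by
  have hpa : insert a (P.part a ∩ s) = P.part a := by
    rw [insert_inter_distrib, insert_eq_of_mem (P.mem_part (mem_insert_self a s)),
      inter_eq_left.2 (P.part_subset a)]
  refine ext_part fun x hx => ?_
  by_cases hxa : x ∈ P.part a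
  · rw [part_insertInto_of_mem _ _ _ (by rwa [hpa]), hpa]
    exact (P.part_eq_of_mem (P.part_mem.2 (mem_insert_self a s)) hxa).symm
  have hxs : x ∈ s := (mem_insert.1 hx).resolve_left fun h => hxa (h ▸ P.mem_part hx)
  have hax : a ∉ P.part x := fun h => hxa (P.part_eq_of_mem (P.part_mem.2 hx) h ▸ P.mem_part hx)
  rw [part_insertInto_of_notMem _ _ _
      (P.part_inter_mem_insert_empty_restrict _ (mem_insert_self a s)) hxs fun h => hxa (mem_inter.1 h).1,
    part_restrict _ _ hxs, inter_eq_left]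
  exact fun y hy => (mem_insert.1 (P.part_subset x hy)).resolve_left (by rintro rfl; exact hax hy)

theorem restrict_insertInto (Q : Finpartition s) (ha : a ∉ s) (ht : t ∈ insert ∅ Q.parts) :
    (Q.insertInto ha (Q.subset_of_mem_insert_empty ht)).restrict (subset_insert a s) = Q := by
  have hat : insert a t ∩ s = t := by
    rw [insert_inter_of_notMem ha, inter_eq_left.2 (Q.subset_of_mem_insert_empty ht)]
  refine ext_part fun x hxs => ?_
  rw [part_restrict _ _ hxs]
  by_cases hxt : x ∈ t
  · rw [part_insertInto_of_mem _ _ _ (mem_insert_of_mem hxt), hat]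
    exact (Q.part_eq_of_mem ((mem_insert.1 ht).resolve_left (ne_empty_of_mem hxt)) hxt).symm
  · rw [part_insertInto_of_notMem _ _ _ ht hxs hxt, inter_eq_left.2 (Q.part_subset x)]

theorem part_insertInto_self_inter (Q : Finpartition s) (ha : a ∉ s) (hts : t ⊆ s) :
    (Q.insertInto ha hts).part a ∩ s = t := by
  rw [part_insertInto_of_mem _ _ _ (mem_insert_self a t), insert_inter_of_notMem ha,
    inter_eq_left.2 hts]

def insertEquiv (ha : a ∉ s) :
    Finpartition (insert a s) ≃ Σ Q : Finpartition s, (insert ∅ Q.parts : Finset (Finset α)) where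
  toFun P := ⟨P.restrict (subset_insert a s), P.part a ∩ s,
    P.part_inter_mem_insert_empty_restrict _ (mem_insert_self a s)⟩
  invFun Q := Q.1.insertInto ha (Q.1.subset_of_mem_insert_empty Q.2.2)
  left_inv P := P.insertInto_restrict ha
  right_inv := fun ⟨Q, _, ht⟩ => Sigma.subtype_ext (Q.restrict_insertInto ha ht)
    (Q.part_insertInto_self_inter ha _)

theorem card_parts_insertEquiv_symm (ha : a ∉ s)
    (x : Σ Q : Finpartition s, (insert ∅ Q.parts : Finset (Finset α))) :
    #((insertEquiv ha).symm x).parts = #x.1.parts + if x.2.1 = ∅ then 1 else 0 :=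
  card_parts_insertInto _ ha (x.1.subset_of_mem_insert_empty x.2.2) x.2.2

theorem card_filter_card_parts_insert (ha : a ∉ s) (n : ℕ) :
    #{P : Finpartition (insert a s) | #P.parts = n} =
      #{Q : Finpartition s | #Q.parts + 1 = n} + n * #{Q : Finpartition s | #Q.parts = n} := by
  simp only [card_filter, ← (insertEquiv ha).symm.sum_comp, card_parts_insertEquiv_symm,
    Fintype.sum_sigma, mul_sum, ← sum_add_distrib]
  refine sum_congr rfl fun Q _ => ?_
  rw [sum_coe_sort (insert ∅ Q.parts)
      fun t => if #Q.parts + (if t = ∅ then 1 else 0) = n then 1 else 0,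
    sum_insert Q.empty_notMem_parts,
    sum_congr rfl fun t ht => by rw [if_neg (Q.ne_empty ht), add_zero], sum_const, smul_eq_mul]
  by_cases h : #Q.parts = n <;> simp [h]

theorem card_filter_card_parts (s : Finset α) (n : ℕ) :
    #{P : Finpartition s | #P.parts = n} = Nat.stirlingSecond #s n := by
  induction s using Finset.induction_on generalizing n with
  | empty =>
    have hparts (P : Finpartition (∅ : Finset α)) : #P.parts = 0 := by simp
    have hcard : Fintype.card (Finpartition (∅ : Finset α)) = 1 :=
      Fintype.card_eq_one_iff.2
        ⟨⊥, fun _ => Subsingleton.elim (α := Finpartition (⊥ : Finset α)) _ _⟩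
    cases n <;> simp [hparts, hcard]
  | insert a s ha ih =>
    rw [card_filter_card_parts_insert ha, card_insert_of_notMem ha]
    cases n with
    | zero => simp
    | succ m => simp only [add_left_inj, ih, Nat.stirlingSecond_succ_succ, add_comm]

end Finpartition

theorem stirling2_eq_stirlingSecond (k ℓ : ℕ) : stirling2 k ℓ = Nat.stirlingSecond k ℓ := by
  rw [stirling2, Nat.card_eq_fintype_card, Fintype.card_subtype,
    Finpartition.card_filter_card_parts, Finset.card_univ, Fintype.card_fin]

theorem sum_range_stirlingSecond_succ_mul {R : Type*} [CommRing R] (k : ℕ) (T : ℕ → R) :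
    ∑ ℓ ∈ range (k + 2), (-1) ^ ℓ * ℓ.factorial * Nat.stirlingSecond (k + 1) ℓ * T ℓ =
      ∑ ℓ ∈ range (k + 1), (-1) ^ ℓ * ℓ.factorial * Nat.stirlingSecond k ℓ *
        (ℓ * T ℓ - (ℓ + 1) * T (ℓ + 1)) := by
  set c : ℕ → R := fun ℓ => (-1) ^ ℓ * ℓ.factorial * Nat.stirlingSecond k ℓ
  have hshift : ∑ ℓ ∈ range (k + 1), c ℓ * ℓ * T ℓ =
      ∑ ℓ ∈ range (k + 1), c (ℓ + 1) * (ℓ + 1 : ℕ) * T (ℓ + 1) := by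
    rw [sum_range_succ', sum_range_succ (fun ℓ => c (ℓ + 1) * (ℓ + 1 : ℕ) * T (ℓ + 1))]
    simp [c, Nat.stirlingSecond_eq_zero_of_lt (Nat.lt_succ_self k)]
  simp only [mul_sub, ← mul_assoc, sum_sub_distrib]
  rw [hshift, ← sum_sub_distrib, sum_range_succ', Nat.stirlingSecond_succ_zero]
  simp only [Nat.cast_zero, mul_zero, zero_mul, add_zero]
  refine sum_congr rfl fun ℓ _ => ?_
  simp only [c, Nat.stirlingSecond_succ_succ, Nat.factorial_succ]
  push_cast
  ring

theorem AnalyticAt.isBigO_sub_taylor_ofReal {g : ℂ → ℂ} (hg : AnalyticAt ℂ g 0) (K : ℕ) :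
    (fun x : ℝ => g x - ∑ j ∈ range K, iteratedDeriv j g 0 / j.factorial * (x : ℂ) ^ j)
      =O[𝓝 0] fun x : ℝ => x ^ K := by
  have h := (hg.hasFPowerSeriesAt.isBigO_sub_partialSum_pow K).comp_tendsto
    (continuous_ofReal.tendsto' 0 0 ofReal_zero)
  rw [← isBigO_norm_right]
  simpa [Function.comp_def, FormalMultilinearSeries.partialSum,
    FormalMultilinearSeries.ofScalars_apply_eq, mul_comm] using h

noncomputable def expFrac (μ : ℂ) (ℓ : ℕ) (z : ℂ) : ℂ := exp z ^ ℓ / (exp z - μ) ^ (ℓ + 1)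

theorem hasDerivAt_expFrac {μ z : ℂ} (hz : exp z ≠ μ) (ℓ : ℕ) :
    HasDerivAt (expFrac μ ℓ) (ℓ * expFrac μ ℓ z - (ℓ + 1) * expFrac μ (ℓ + 1) z) z := by
  have hz' : exp z - μ ≠ 0 := sub_ne_zero.2 hz
  have h := ((hasDerivAt_exp z).fun_pow ℓ).fun_div
    (((hasDerivAt_exp z).sub_const μ).fun_pow (ℓ + 1)) (pow_ne_zero _ hz')
  refine h.congr_deriv ?_
  rcases ℓ with _ | ℓ
  · simp [expFrac]
    field_simp
  · simp only [expFrac, Nat.add_sub_cancel]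
    field_simp
    push_cast
    ring

theorem iteratedDeriv_div_exp_sub (μ : ℂ) (k : ℕ) {z : ℂ} (hz : exp z ≠ μ) :
    iteratedDeriv k (fun w => μ / (exp w - μ)) z =
      μ * ∑ ℓ ∈ range (k + 1),
        (-1) ^ ℓ * ℓ.factorial * Nat.stirlingSecond k ℓ * expFrac μ ℓ z := by
  induction k generalizing z with
  | zero => simp [expFrac, div_eq_mul_inv]
  | succ k ih =>
    have hev : iteratedDeriv k (fun w => μ / (exp w - μ)) =ᶠ[𝓝 z]
        fun w => μ * ∑ ℓ ∈ range (k + 1),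
          (-1) ^ ℓ * ℓ.factorial * Nat.stirlingSecond k ℓ * expFrac μ ℓ w :=
      ((isOpen_ne.preimage continuous_exp).eventually_mem hz).mono fun w hw => ih hw
    rw [iteratedDeriv_succ, hev.deriv_eq, sum_range_stirlingSecond_succ_mul]
    exact (HasDerivAt.const_mul μ (HasDerivAt.fun_sum fun ℓ _ =>
      (hasDerivAt_expFrac hz ℓ).const_mul _)).deriv

theorem zeta_mu_at_neg_int_general (μ : ℂ) (hμ1 : μ ≠ 1) (k : ℕ)
    (f : ℝ → ℂ) (hf : ∀ x : ℝ, f x = μ / (Complex.exp (x : ℂ) - μ))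
    (Z : ℂ → ℂ)
    (hZk : ∀ c : ℕ → ℂ,
      (∀ K : ℕ, (fun x : ℝ => f x - ∑ j ∈ Finset.range K, c j * (x : ℂ) ^ j)
          =O[nhds 0] fun x : ℝ => x ^ K) →
      Z (-(k : ℂ)) = (-1) ^ k * (Nat.factorial k : ℂ) * c k) :
    Z (-(k : ℂ)) = ((-1) ^ k * μ / (1 - μ)) *
      ∑ ℓ ∈ Finset.range (k + 1),
        (Nat.factorial ℓ : ℂ) * (stirling2 k ℓ : ℂ) / (μ - 1) ^ ℓ := by
  have hexp : exp 0 ≠ μ := by rwa [exp_zero, ne_comm]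
  have hg : AnalyticAt ℂ (fun w => μ / (exp w - μ)) 0 :=
    analyticAt_const.div (analyticAt_cexp.sub analyticAt_const) (sub_ne_zero.2 hexp)
  obtain rfl : f = fun x : ℝ => μ / (exp x - μ) := funext hf
  have h1μ : 1 - μ ≠ 0 := sub_ne_zero.2 hμ1.symm
  rw [hZk _ hg.isBigO_sub_taylor_ofReal, iteratedDeriv_div_exp_sub μ k hexp, mul_assoc,
    mul_div_cancel₀ _ (Nat.cast_ne_zero.2 k.factorial_ne_zero), mul_sum, mul_sum, mul_sum]
  refine sum_congr rfl fun ℓ _ => ?_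
  have hsq : (-1 : ℂ) ^ ℓ * (-1) ^ ℓ = 1 := by rw [← mul_pow]; norm_num
  rw [stirling2_eq_stirlingSecond, expFrac, exp_zero, one_pow]
  field_simp
  rw [show μ - 1 = -(1 - μ) by ring, neg_pow (1 - μ)]
  linear_combination (μ * ℓ.factorial * k.stirlingSecond ℓ * (1 - μ) ^ (ℓ + 1)) * hsq

theorem zeta_mu_at_neg_int (μ : ℂ) (hμ : ‖μ‖ = 1) (hμ1 : μ ≠ 1) (k : ℕ)
    (f : ℝ → ℂ) (hf : ∀ x : ℝ, f x = μ / (Complex.exp (x : ℂ) - μ))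
    (Z : ℂ → ℂ)
    (hZ : ∀ s : ℂ, 1 < s.re →
      HasSum (fun m : ℕ => μ ^ (m + 1) * ((m : ℂ) + 1) ^ (-s)) (Z s))
    (hZk : ∀ c : ℕ → ℂ,
      (∀ K : ℕ, (fun x : ℝ => f x - ∑ j ∈ Finset.range K, c j * (x : ℂ) ^ j)
          =O[nhds 0] fun x : ℝ => x ^ K) →
      Z (-(k : ℂ)) = (-1) ^ k * (Nat.factorial k : ℂ) * c k) :
    Z (-(k : ℂ)) = ((-1) ^ k * μ / (1 - μ)) *
      ∑ ℓ ∈ Finset.range (k + 1),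
        (Nat.factorial ℓ : ℂ) * (stirling2 k ℓ : ℂ) / (μ - 1) ^ ℓ :=
  zeta_mu_at_neg_int_general μ hμ1 k f hf Z hZk
end
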